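/- Let A be the incidence matrix of a simple connected directed graph G with at least one simple cycle, and let W₁ = {w(C)/‖w(C)‖₁ : C a simple cycle of G}. For every nonempty index set S of edges, the maximum of ‖η_S‖₁ over η in nullspace(A) ∩ (closed unit ℓ¹-ball) equals the maximum of ‖z_S‖₁ over z ∈ W₁. -/

import Mathlib

open Finset

/-- ℓ⁰ "norm": the number of nonzero entries of a vector. -/
noncomputable def l0 {k : ℕ} (x : Fin k → ℝ) : ℕ :=
  (Finset.univ.filter (fun i => x i ≠ 0)).card

/-- ℓ¹ norm of a vector. -/
noncomputable def l1 {k : ℕ} (x : Fin k → ℝ) : ℝ := ∑ i, |x i|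

/-- The spark of a matrix: the smallest number of linearly dependent columns
(`⊤` if the columns are linearly independent). -/
noncomputable def spark {m n : ℕ} (Φ : Matrix (Fin m) (Fin n) ℝ) : ℕ∞ :=
  sInf {k : ℕ∞ | ∃ η : Fin n → ℝ, η ≠ 0 ∧ Φ.mulVec η = 0 ∧ k = (l0 η : ℕ∞)}

/-- A simple directed graph on `m` vertices with `n` edges: no self loops and at
most one edge between any two vertices. -/
structure DiGraph (m n : ℕ) where
  src : Fin n → Fin m
  tgt : Fin n → Fin m
  loopless : ∀ j, src j ≠ tgt j
  simple : ∀ j k : Fin n, ({src j, tgt j} : Finset (Fin m)) = {src k, tgt k} → j = k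

/-- The incidence matrix of a directed graph. -/
noncomputable def inc {m n : ℕ} (G : DiGraph m n) : Matrix (Fin m) (Fin n) ℝ :=
  fun i j => if G.tgt j = i then 1 else if G.src j = i then -1 else 0

/-- The underlying undirected simple graph. -/
def toSG {m n : ℕ} (G : DiGraph m n) : SimpleGraph (Fin m) where
  Adj u v := u ≠ v ∧ ∃ j, (G.src j = u ∧ G.tgt j = v) ∨ (G.src j = v ∧ G.tgt j = u)
  symm := ⟨fun u v h => ⟨h.1.symm, h.2.elim fun j hj => ⟨j, hj.symm⟩⟩⟩
  loopless := ⟨fun u h => h.1 rfl⟩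

/-- `u 0, u 1, …, u (r-1), u 0` is a simple cycle of length `r` in the underlying
undirected graph of `G`. -/
def IsSimpleCycle {m n : ℕ} (G : DiGraph m n) (r : ℕ) (u : ℕ → Fin m) : Prop :=
  3 ≤ r ∧ (∀ i < r, ∀ j < r, u i = u j → i = j) ∧
    ∀ i < r, ∃ j, (G.src j = u i ∧ G.tgt j = u ((i + 1) % r)) ∨
      (G.src j = u ((i + 1) % r) ∧ G.tgt j = u i)

/-- The signed indicator vector `w(C)` of a simple cycle. -/
noncomputable def cycVec {m n : ℕ} (G : DiGraph m n) (r : ℕ) (u : ℕ → Fin m) : Fin n → ℝ :=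
  fun j => ∑ i ∈ Finset.range r,
    ((if G.src j = u i ∧ G.tgt j = u ((i + 1) % r) then (1 : ℝ) else 0) -
     (if G.src j = u ((i + 1) % r) ∧ G.tgt j = u i then (1 : ℝ) else 0))

/-- The girth of (the underlying undirected graph of) `G`: the length of the
shortest simple cycle, `⊤` if `G` is acyclic. -/
noncomputable def dgirth {m n : ℕ} (G : DiGraph m n) : ℕ∞ :=
  sInf {r : ℕ∞ | ∃ (k : ℕ) (u : ℕ → Fin m), IsSimpleCycle G k u ∧ r = (k : ℕ∞)}

/-- The set of normalized simple cycle vectors `w(C)/‖w(C)‖₁`. -/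
noncomputable def W1 {m n : ℕ} (G : DiGraph m n) : Set (Fin n → ℝ) :=
  {z | ∃ r u, IsSimpleCycle G r u ∧ z = (l1 (cycVec G r u))⁻¹ • cycVec G r u}

section Aux

open Classical in
noncomputable instance : ∀ p : Prop, Decidable p := fun p => Classical.dec p

variable {m n : ℕ}

/-- Edge `j` realizes step `i` of the cycle. -/
def mtch (G : DiGraph m n) (r : ℕ) (u : ℕ → Fin m) (i : ℕ) (j : Fin n) : Prop :=
  (G.src j = u i ∧ G.tgt j = u ((i + 1) % r)) ∨
  (G.src j = u ((i + 1) % r) ∧ G.tgt j = u i)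

variable {G : DiGraph m n} {r : ℕ} {u : ℕ → Fin m}

lemma mtch_pair {i : ℕ} {j : Fin n} (h : mtch G r u i j) :
    ({G.src j, G.tgt j} : Finset (Fin m)) = {u i, u ((i + 1) % r)} := by
  rcases h with ⟨h1, h2⟩ | ⟨h1, h2⟩
  · rw [h1, h2]
  · rw [h1, h2, Finset.pair_comm]

lemma mtch_unique_j {i : ℕ} {j j' : Fin n} (h : mtch G r u i j) (h' : mtch G r u i j') :
    j = j' := by
  apply G.simple
  rw [mtch_pair h, mtch_pair h']

lemma succ_mod_lt (hr : 3 ≤ r) (i : ℕ) : (i + 1) % r < r :=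
  Nat.mod_lt _ (by omega)

lemma succ_mod_ne (hC : IsSimpleCycle G r u) {i : ℕ} (hi : i < r) :
    u i ≠ u ((i + 1) % r) := by
  intro h
  have hr := hC.1
  have h2 := hC.2.1 i hi ((i + 1) % r) (succ_mod_lt hr i) h
  rcases Nat.lt_or_ge (i + 1) r with h' | h'
  · rw [Nat.mod_eq_of_lt h'] at h2; omega
  · have : i + 1 = r := by omega
    rw [this, Nat.mod_self] at h2; omega

lemma mtch_unique_i (hC : IsSimpleCycle G r u) {i i' : ℕ} (hi : i < r) (hi' : i' < r)
    {j : Fin n} (h : mtch G r u i j) (h' : mtch G r u i' j) : i = i' := by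
  have hr := hC.1
  have hinj := hC.2.1
  have hp : ({u i, u ((i + 1) % r)} : Finset (Fin m)) = {u i', u ((i' + 1) % r)} := by
    rw [← mtch_pair h, ← mtch_pair h']
  have e0 : u i = u i' ∨ u i = u ((i' + 1) % r) := by
    have : u i ∈ ({u i', u ((i' + 1) % r)} : Finset (Fin m)) := by
      rw [← hp]; exact Finset.mem_insert_self _ _
    simpa using this
  have e0' : u ((i + 1) % r) = u i' ∨ u ((i + 1) % r) = u ((i' + 1) % r) := by
    have : u ((i + 1) % r) ∈ ({u i', u ((i' + 1) % r)} : Finset (Fin m)) := by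
      rw [← hp]; exact Finset.mem_insert_of_mem (Finset.mem_singleton_self _)
    simpa using this
  rcases e0 with e1 | e1
  · exact hinj i hi i' hi' e1
  rcases e0' with e2 | e2
  swap
  · have q : (i + 1) % r = (i' + 1) % r :=
      hinj _ (succ_mod_lt hr i) _ (succ_mod_lt hr i') e2
    rcases Nat.lt_or_ge (i + 1) r with a1 | a1 <;> rcases Nat.lt_or_ge (i' + 1) r with a2 | a2
    · rw [Nat.mod_eq_of_lt a1, Nat.mod_eq_of_lt a2] at q; omega
    · have : i' + 1 = r := by omega
      rw [Nat.mod_eq_of_lt a1, this, Nat.mod_self] at q; omega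
    · have : i + 1 = r := by omega
      rw [this, Nat.mod_self, Nat.mod_eq_of_lt a2] at q; omega
    · omega
  · -- u i = u ((i'+1)%r), u ((i+1)%r) = u i'
    have q1 : i = (i' + 1) % r := hinj i hi _ (succ_mod_lt hr i') e1
    have q2 : (i + 1) % r = i' := hinj _ (succ_mod_lt hr i) i' hi' e2
    -- so i' + 2 ≡ i' mod r, contradiction with r ≥ 3
    rw [q1] at q2
    rw [Nat.mod_add_mod] at q2
    have e12 : i' + 1 + 1 = i' + 2 := by omega
    rw [e12] at q2
    rcases Nat.lt_or_ge (i' + 2) r with h2 | h2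
    · rw [Nat.mod_eq_of_lt h2] at q2; omega
    · have h3 : i' + 2 - r < r := by omega
      have : (i' + 2) % r = i' + 2 - r := by
        rw [Nat.mod_eq_sub_mod h2, Nat.mod_eq_of_lt h3]
      omega

lemma not_both {i : ℕ} (hC : IsSimpleCycle G r u) (hi : i < r) {j : Fin n}
    (h1 : G.src j = u i ∧ G.tgt j = u ((i + 1) % r))
    (h2 : G.src j = u ((i + 1) % r) ∧ G.tgt j = u i) : False := by
  have := succ_mod_ne hC hi
  rw [← h1.1, ← h2.1] at this
  exact this rfl

lemma cycVec_of_mtch (hC : IsSimpleCycle G r u) {i : ℕ} (hi : i < r) {j : Fin n}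
    (h : mtch G r u i j) :
    cycVec G r u j =
      (if G.src j = u i ∧ G.tgt j = u ((i + 1) % r) then (1 : ℝ) else 0) -
      (if G.src j = u ((i + 1) % r) ∧ G.tgt j = u i then (1 : ℝ) else 0) := by
  unfold cycVec
  rw [Finset.sum_eq_single_of_mem i (Finset.mem_range.2 hi)]
  intro b hb hbi
  rw [Finset.mem_range] at hb
  have : ¬ mtch G r u b j := fun hm => hbi (mtch_unique_i hC hb hi hm h)
  unfold mtch at this
  push_neg at this
  rw [if_neg (fun hh => (this.1 hh.1 hh.2).elim), if_neg (fun hh => (this.2 hh.1 hh.2).elim)]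
  ring

lemma cycVec_of_not_mtch {j : Fin n} (h : ∀ i < r, ¬ mtch G r u i j) :
    cycVec G r u j = 0 := by
  unfold cycVec
  apply Finset.sum_eq_zero
  intro i hi
  rw [Finset.mem_range] at hi
  have := h i hi
  unfold mtch at this
  push_neg at this
  rw [if_neg (fun hh => (this.1 hh.1 hh.2).elim), if_neg (fun hh => (this.2 hh.1 hh.2).elim)]
  ring

lemma cycVec_cases (hC : IsSimpleCycle G r u) (j : Fin n) :
    cycVec G r u j = 0 ∨ cycVec G r u j = 1 ∨ cycVec G r u j = -1 := by
  by_cases h : ∃ i < r, mtch G r u i j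
  · obtain ⟨i, hi, hm⟩ := h
    rw [cycVec_of_mtch hC hi hm]
    rcases hm with hm | hm
    · rw [if_pos hm, if_neg (fun h2 => not_both hC hi hm h2)]; right; left; ring
    · rw [if_neg (fun h2 => not_both hC hi h2 hm), if_pos hm]; right; right; ring
  · push_neg at h
    exact Or.inl (cycVec_of_not_mtch h)

lemma cycVec_ne_zero_iff (hC : IsSimpleCycle G r u) (j : Fin n) :
    cycVec G r u j ≠ 0 ↔ ∃ i < r, mtch G r u i j := by
  constructor
  · intro h
    by_contra hc
    push_neg at hc
    exact h (cycVec_of_not_mtch hc)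
  · rintro ⟨i, hi, hm⟩
    rw [cycVec_of_mtch hC hi hm]
    rcases hm with hm | hm
    · rw [if_pos hm, if_neg (fun h2 => not_both hC hi hm h2)]; norm_num
    · rw [if_neg (fun h2 => not_both hC hi h2 hm), if_pos hm]; norm_num

lemma abs_cycVec (hC : IsSimpleCycle G r u) (j : Fin n) :
    |cycVec G r u j| = ∑ i ∈ Finset.range r, (if mtch G r u i j then (1 : ℝ) else 0) := by
  by_cases h : ∃ i < r, mtch G r u i j
  · obtain ⟨i, hi, hm⟩ := h
    rw [Finset.sum_eq_single_of_mem i (Finset.mem_range.2 hi)]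
    · rw [if_pos hm]
      rw [cycVec_of_mtch hC hi hm]
      rcases hm with hm | hm
      · rw [if_pos hm, if_neg (fun h2 => not_both hC hi hm h2)]; norm_num
      · rw [if_neg (fun h2 => not_both hC hi h2 hm), if_pos hm]; norm_num
    · intro b hb hbi
      rw [Finset.mem_range] at hb
      exact if_neg (fun hm' => hbi (mtch_unique_i hC hb hi hm' hm))
  · push_neg at h
    rw [cycVec_of_not_mtch h, abs_zero]
    symm
    apply Finset.sum_eq_zero
    intro i hi
    rw [Finset.mem_range] at hi
    exact if_neg (h i hi)

lemma l1_cycVec (hC : IsSimpleCycle G r u) : l1 (cycVec G r u) = r := by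
  unfold l1
  have : ∀ j, |cycVec G r u j| = ∑ i ∈ Finset.range r, (if mtch G r u i j then (1 : ℝ) else 0) :=
    abs_cycVec hC
  simp_rw [this]
  rw [Finset.sum_comm]
  have : ∀ i ∈ Finset.range r, (∑ j : Fin n, if mtch G r u i j then (1 : ℝ) else 0) = 1 := by
    intro i hi
    rw [Finset.mem_range] at hi
    obtain ⟨j, hj⟩ := hC.2.2 i hi
    rw [Finset.sum_eq_single_of_mem j (Finset.mem_univ j)]
    · exact if_pos hj
    · intro b _ hbj
      exact if_neg (fun hm => hbj (mtch_unique_j hm hj))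
  rw [Finset.sum_congr rfl this]
  simp

lemma mulVec_cycVec (hC : IsSimpleCycle G r u) : (inc G).mulVec (cycVec G r u) = 0 := by
  funext v
  show ∑ j, inc G v j * cycVec G r u j = 0
  have key : ∀ j, inc G v j * cycVec G r u j = ∑ i ∈ Finset.range r,
      inc G v j * ((if G.src j = u i ∧ G.tgt j = u ((i + 1) % r) then (1 : ℝ) else 0) -
        (if G.src j = u ((i + 1) % r) ∧ G.tgt j = u i then (1 : ℝ) else 0)) := by
    intro j
    rw [← Finset.mul_sum]
    rfl
  simp_rw [key]
  rw [Finset.sum_comm]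
  have inner : ∀ i ∈ Finset.range r,
      (∑ j : Fin n, inc G v j * ((if G.src j = u i ∧ G.tgt j = u ((i + 1) % r) then (1 : ℝ) else 0) -
        (if G.src j = u ((i + 1) % r) ∧ G.tgt j = u i then (1 : ℝ) else 0))) =
      (if u ((i + 1) % r) = v then (1 : ℝ) else 0) - (if u i = v then (1 : ℝ) else 0) := by
    intro i hi
    rw [Finset.mem_range] at hi
    obtain ⟨j₀, hj₀⟩ := hC.2.2 i hi
    rw [Finset.sum_eq_single_of_mem j₀ (Finset.mem_univ j₀)]
    · have hne : u i ≠ u ((i + 1) % r) := succ_mod_ne hC hi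
      rcases hj₀ with hm | hm
      · rw [if_pos hm, if_neg (fun h2 => not_both hC hi hm h2)]
        unfold inc
        rw [hm.1, hm.2]
        by_cases h1 : u ((i + 1) % r) = v
        · rw [if_pos h1, if_neg (fun h2 : u i = v => hne (h2.trans h1.symm)), if_pos h1]
          ring
        · rw [if_neg h1, if_neg h1]
          by_cases h2 : u i = v
          · rw [if_pos h2, if_pos h2]; ring
          · rw [if_neg h2, if_neg h2]; ring
      · rw [if_neg (fun h2 => not_both hC hi h2 hm), if_pos hm]
        unfold inc
        rw [hm.1, hm.2]
        by_cases h1 : u i = v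
        · rw [if_pos h1, if_neg (fun h2 : u ((i+1)%r) = v => hne (h1.trans h2.symm)), if_pos h1]
          ring
        · rw [if_neg h1, if_neg h1]
          by_cases h2 : u ((i + 1) % r) = v
          · rw [if_pos h2, if_pos h2]; ring
          · rw [if_neg h2, if_neg h2]; ring
    · intro b _ hbj
      have : ¬ mtch G r u i b := fun hm => hbj (mtch_unique_j hm hj₀)
      unfold mtch at this
      push_neg at this
      rw [if_neg (fun hh => (this.1 hh.1 hh.2).elim), if_neg (fun hh => (this.2 hh.1 hh.2).elim)]
      ring
  rw [Finset.sum_congr rfl inner]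
  rw [Finset.sum_sub_distrib]
  have hre : (∑ i ∈ Finset.range r, if u ((i + 1) % r) = v then (1 : ℝ) else 0) =
      ∑ i ∈ Finset.range r, if u i = v then (1 : ℝ) else 0 := by
    have hr : 3 ≤ r := hC.1
    apply Finset.sum_nbij' (fun i => (i + 1) % r) (fun i => (i + (r - 1)) % r)
    · intro a ha; exact Finset.mem_range.2 (succ_mod_lt hr a)
    · intro a ha; exact Finset.mem_range.2 (Nat.mod_lt _ (by omega))
    · intro a ha
      rw [Finset.mem_range] at ha
      rw [Nat.mod_add_mod]
      have : a + 1 + (r - 1) = a + r := by omega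
      rw [this, Nat.add_mod_right, Nat.mod_eq_of_lt ha]
    · intro a ha
      rw [Finset.mem_range] at ha
      rw [Nat.mod_add_mod]
      have : a + (r - 1) + 1 = a + r := by omega
      rw [this, Nat.add_mod_right, Nat.mod_eq_of_lt ha]
    · intro a ha; rfl
  rw [hre, sub_self]

end Aux

section Arcs

variable {m n : ℕ} (G : DiGraph m n) (eta : Fin n → ℝ)

/-- Directed arc of the support of a flow. -/
def arc (x y : Fin m) : Prop :=
  ∃ j, (0 < eta j ∧ G.src j = x ∧ G.tgt j = y) ∨ (eta j < 0 ∧ G.src j = y ∧ G.tgt j = x)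

variable {G eta}

lemma arc_ne {x y : Fin m} (h : arc G eta x y) : x ≠ y := by
  obtain ⟨j, hj | hj⟩ := h
  · rw [← hj.2.1, ← hj.2.2]; exact G.loopless j
  · rw [← hj.2.2, ← hj.2.1]; exact fun h' => G.loopless j h'.symm

lemma arc_step (heta : (inc G).mulVec eta = 0) {x v : Fin m} (h : arc G eta x v) :
    ∃ w, arc G eta v w := by
  by_contra hc
  push_neg at hc
  have hsum : ∑ j, inc G v j * eta j = 0 := congrFun heta v
  have hnn : ∀ j, (0 : ℝ) ≤ inc G v j * eta j := by
    intro j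
    unfold inc
    by_cases h1 : G.tgt j = v
    · rw [if_pos h1, one_mul]
      by_contra hneg
      push_neg at hneg
      exact hc (G.src j) ⟨j, Or.inr ⟨hneg, rfl, h1⟩⟩
    · rw [if_neg h1]
      by_cases h2 : G.src j = v
      · rw [if_pos h2, neg_one_mul, neg_nonneg]
        by_contra hpos
        push_neg at hpos
        exact hc (G.tgt j) ⟨j, Or.inl ⟨hpos, h2, rfl⟩⟩
      · rw [if_neg h2, zero_mul]
  obtain ⟨j₀, hj₀⟩ := h
  have hpos0 : 0 < inc G v j₀ * eta j₀ := by
    unfold inc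
    rcases hj₀ with ⟨he, _, ht⟩ | ⟨he, hs, _⟩
    · rw [if_pos ht, one_mul]; exact he
    · have htne : G.tgt j₀ ≠ v := fun h' => G.loopless j₀ (hs.trans h'.symm)
      rw [if_neg htne, if_pos hs, neg_one_mul, neg_pos]; exact he
  have : 0 < ∑ j, inc G v j * eta j :=
    Finset.sum_pos' (fun j _ => hnn j) ⟨j₀, Finset.mem_univ j₀, hpos0⟩
  linarith

end Arcs

noncomputable def walkSeq {m n : ℕ} (G : DiGraph m n) (eta : Fin n → ℝ) (y0 : Fin m) :
    ℕ → Fin m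
  | 0 => y0
  | k + 1 =>
    if h : ∃ w, arc G eta (walkSeq G eta y0 k) w then h.choose else walkSeq G eta y0 k

section Conformal

variable {m n : ℕ} {G : DiGraph m n} {eta : Fin n → ℝ}

lemma exists_cycle_conformal (heta : (inc G).mulVec eta = 0) (hne : eta ≠ 0) :
    ∃ r u, IsSimpleCycle G r u ∧ ∀ j, cycVec G r u j ≠ 0 → 0 < cycVec G r u j * eta j := by
  -- a starting arc
  obtain ⟨j₀, hj₀⟩ : ∃ j, eta j ≠ 0 := by
    by_contra hc; push_neg at hc; exact hne (funext hc)
  have hstart : ∃ x y, arc G eta x y := by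
    rcases lt_or_gt_of_ne hj₀ with h | h
    · exact ⟨G.tgt j₀, G.src j₀, j₀, Or.inr ⟨h, rfl, rfl⟩⟩
    · exact ⟨G.src j₀, G.tgt j₀, j₀, Or.inl ⟨h, rfl, rfl⟩⟩
  obtain ⟨x0, y0, harc0⟩ := hstart
  set seq : ℕ → Fin m := walkSeq G eta y0 with hseq
  have hin : ∀ k, ∃ x, arc G eta x (seq k) := by
    intro k
    induction k with
    | zero => exact ⟨x0, harc0⟩
    | succ k ih =>
      have hout : ∃ w, arc G eta (seq k) w := arc_step heta ih.choose_spec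
      refine ⟨seq k, ?_⟩
      show arc G eta (seq k) (walkSeq G eta y0 (k + 1))
      rw [walkSeq, dif_pos hout]
      exact hout.choose_spec
  have hstep : ∀ k, arc G eta (seq k) (seq (k + 1)) := by
    intro k
    have hout : ∃ w, arc G eta (seq k) w := arc_step heta (hin k).choose_spec
    show arc G eta (seq k) (walkSeq G eta y0 (k + 1))
    rw [walkSeq, dif_pos hout]
    exact hout.choose_spec
  -- find a repeat
  obtain ⟨a0, b0, hab0, heq0⟩ := Finite.exists_ne_map_eq_of_infinite seq
  have hP : ∃ b, ∃ a, a < b ∧ seq a = seq b := by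
    rcases Nat.lt_or_ge a0 b0 with h | h
    · exact ⟨b0, a0, h, heq0⟩
    · exact ⟨a0, b0, by omega, heq0.symm⟩
  set B := Nat.find hP with hB
  obtain ⟨a, haB, heqB⟩ := Nat.find_spec hP
  have hmin : ∀ b' < B, ∀ a' < b', seq a' ≠ seq b' := by
    intro b' hb' a' ha' hcontra
    exact Nat.find_min hP hb' ⟨a', ha', hcontra⟩
  set r := B - a with hrdef
  set u : ℕ → Fin m := fun i => seq (a + i) with hu
  have hinj : ∀ i < r, ∀ j < r, u i = u j → i = j := by
    intro i hi j hj he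
    rcases lt_trichotomy i j with h | h | h
    · exact absurd he (hmin (a + j) (by omega) (a + i) (by omega))
    · exact h
    · exact absurd he.symm (hmin (a + i) (by omega) (a + j) (by omega))
  have harc : ∀ i < r, arc G eta (u i) (u ((i + 1) % r)) := by
    intro i hi
    rcases Nat.lt_or_ge (i + 1) r with h | h
    · rw [Nat.mod_eq_of_lt h]
      exact hstep (a + i)
    · have hir : i + 1 = r := by omega
      rw [hir, Nat.mod_self]
      have h1 : arc G eta (seq (a + i)) (seq (a + i + 1)) := hstep (a + i)
      have h2 : a + i + 1 = B := by omega
      rw [h2, ← heqB] at h1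
      exact h1
  have hr1 : 1 ≤ r := by omega
  have hrne1 : r ≠ 1 := by
    intro h1
    have := harc 0 (by omega)
    rw [h1] at this
    exact arc_ne this rfl
  have hrne2 : r ≠ 2 := by
    intro h2
    have ha01 : arc G eta (u 0) (u 1) := by
      have := harc 0 (by omega)
      rwa [h2] at this
    have ha10 : arc G eta (u 1) (u 0) := by
      have := harc 1 (by omega)
      rwa [h2] at this
    have h01 : u 0 ≠ u 1 := arc_ne ha01
    obtain ⟨j1, hj1⟩ := ha01
    obtain ⟨j2, hj2⟩ := ha10
    rcases hj1 with ⟨s1, e1, f1⟩ | ⟨s1, e1, f1⟩ <;> rcases hj2 with ⟨s2, e2, f2⟩ | ⟨s2, e2, f2⟩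
    · have hj : j1 = j2 := G.simple _ _ (by rw [e1, f1, e2, f2, Finset.pair_comm])
      subst hj
      exact h01 (e1.symm.trans e2)
    · have hj : j1 = j2 := G.simple _ _ (by rw [e1, f1, e2, f2])
      subst hj
      linarith
    · have hj : j1 = j2 := G.simple _ _ (by rw [e1, f1, e2, f2])
      subst hj
      linarith
    · have hj : j1 = j2 := G.simple _ _ (by rw [e1, f1, e2, f2, Finset.pair_comm])
      subst hj
      exact h01 (e2.symm.trans e1)
  have hr3 : 3 ≤ r := by omega
  have hC : IsSimpleCycle G r u := by
    refine ⟨hr3, hinj, fun i hi => ?_⟩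
    obtain ⟨j, hj⟩ := harc i hi
    exact ⟨j, hj.imp (fun h => h.2) (fun h => h.2)⟩
  refine ⟨r, u, hC, fun j hjne => ?_⟩
  rw [cycVec_ne_zero_iff hC] at hjne
  obtain ⟨i, hi, hm⟩ := hjne
  obtain ⟨j', hj'⟩ := harc i hi
  have hm' : mtch G r u i j' := hj'.imp (fun h => h.2) (fun h => h.2)
  have hjj : j = j' := mtch_unique_j hm hm'
  subst hjj
  rcases hj' with ⟨hp, he⟩ | ⟨hp, he⟩
  · have hv : cycVec G r u j = 1 := by
      rw [cycVec_of_mtch hC hi hm', if_pos he, if_neg (fun h2 => not_both hC hi he h2)]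
      ring
    rw [hv, one_mul]
    exact hp
  · have hv : cycVec G r u j = -1 := by
      rw [cycVec_of_mtch hC hi hm', if_neg (fun h2 => not_both hC hi h2 he), if_pos he]
      ring
    rw [hv]
    linarith

end Conformal

section Main

variable {m n : ℕ} {G : DiGraph m n}

lemma W1_mulVec {z : Fin n → ℝ} (hz : z ∈ W1 G) : (inc G).mulVec z = 0 := by
  obtain ⟨r, u, hC, rfl⟩ := hz
  funext v
  show ∑ j, inc G v j * ((l1 (cycVec G r u))⁻¹ * cycVec G r u j) = 0
  have h0 : ∑ j, inc G v j * cycVec G r u j = 0 := congrFun (mulVec_cycVec hC) v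
  calc ∑ j, inc G v j * ((l1 (cycVec G r u))⁻¹ * cycVec G r u j)
      = (l1 (cycVec G r u))⁻¹ * ∑ j, inc G v j * cycVec G r u j := by
        rw [Finset.mul_sum]; exact Finset.sum_congr rfl (fun j _ => by ring)
    _ = 0 := by rw [h0, mul_zero]

lemma W1_l1 {z : Fin n → ℝ} (hz : z ∈ W1 G) : l1 z = 1 := by
  obtain ⟨r, u, hC, rfl⟩ := hz
  have hr : l1 (cycVec G r u) = r := l1_cycVec hC
  have hr0 : (0 : ℝ) < r := by
    have := hC.1; exact_mod_cast Nat.lt_of_lt_of_le (by omega) this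
  rw [show (l1 (cycVec G r u))⁻¹ • cycVec G r u = ((r : ℝ))⁻¹ • cycVec G r u from by
    rw [hr]]
  unfold l1
  have habs : ∀ i : Fin n, |(((r : ℝ))⁻¹ • cycVec G r u) i| =
      (r : ℝ)⁻¹ * |cycVec G r u i| := by
    intro i
    show |((r : ℝ))⁻¹ * cycVec G r u i| = _
    rw [abs_mul, abs_of_nonneg (by positivity)]
  rw [Finset.sum_congr rfl (fun i _ => habs i), ← Finset.mul_sum]
  have h2 : ∑ i, |cycVec G r u i| = (r : ℝ) := hr
  rw [h2, inv_mul_cancel₀ (ne_of_gt hr0)]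

lemma sumS_abs_le_l1 (S : Finset (Fin n)) (x : Fin n → ℝ) : ∑ i ∈ S, |x i| ≤ l1 x :=
  Finset.sum_le_sum_of_subset_of_nonneg (Finset.subset_univ S)
    (fun i _ _ => abs_nonneg _)

lemma l1_nonneg (x : Fin n → ℝ) : 0 ≤ l1 x :=
  Finset.sum_nonneg (fun i _ => abs_nonneg _)

lemma key_bound (S : Finset (Fin n)) {M : ℝ}
    (hM : ∀ z ∈ W1 G, ∑ i ∈ S, |z i| ≤ M) :
    ∀ N (eta : Fin n → ℝ), l0 eta ≤ N → (inc G).mulVec eta = 0 →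
      ∑ i ∈ S, |eta i| ≤ M * l1 eta := by
  intro N
  induction N with
  | zero =>
    intro eta h0 _
    have : eta = 0 := by
      funext j
      by_contra hj
      have : (Finset.univ.filter (fun i => eta i ≠ 0)).Nonempty :=
        ⟨j, Finset.mem_filter.2 ⟨Finset.mem_univ j, hj⟩⟩
      have := Finset.card_pos.2 this
      unfold l0 at h0
      omega
    subst this
    simp [l1]
  | succ N ih =>
    intro eta hN heta
    by_cases hz : eta = 0
    · subst hz; simp [l1]
    obtain ⟨r, u, hC, hconf⟩ := exists_cycle_conformal heta hz
    set w := cycVec G r u with hw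
    have hl1w : l1 w = r := l1_cycVec hC
    have hr0 : (0 : ℝ) < r := by
      have := hC.1; exact_mod_cast Nat.lt_of_lt_of_le (by omega) this
    have hwsupp : ∃ j, w j ≠ 0 := by
      obtain ⟨j, hj⟩ := hC.2.2 0 (by have := hC.1; omega)
      exact ⟨j, (cycVec_ne_zero_iff hC j).2 ⟨0, by have := hC.1; omega, hj⟩⟩
    set T := Finset.univ.filter (fun j => w j ≠ 0) with hT
    have hTne : T.Nonempty := ⟨hwsupp.choose, by simp [hT, hwsupp.choose_spec]⟩
    have hTmem : ∀ j, j ∈ T ↔ w j ≠ 0 := fun j => by simp [hT]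
    set lam := T.inf' hTne (fun j => |eta j|) with hlam
    have hlam_le : ∀ j ∈ T, lam ≤ |eta j| := fun j hj => Finset.inf'_le _ hj
    have hlam_pos : 0 < lam := by
      rw [hlam, Finset.lt_inf'_iff]
      intro j hj
      have hjw : w j ≠ 0 := (hTmem j).1 hj
      have := hconf j hjw
      have : eta j ≠ 0 := by
        intro h0; rw [h0, mul_zero] at this; exact lt_irrefl 0 this
      exact abs_pos.2 this
    have hwpm : ∀ j, w j ≠ 0 → w j = 1 ∨ w j = -1 := by
      intro j hj
      rcases cycVec_cases hC j with h | h | h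
      · exact absurd h hj
      · exact Or.inl h
      · exact Or.inr h
    set eta' := fun j => eta j - lam * w j with heta'
    have habs : ∀ j, |eta' j| = |eta j| - lam * |w j| := by
      intro j
      by_cases hjw : w j = 0
      · simp [heta', hjw]
      have hle := hlam_le j ((hTmem j).2 hjw)
      show |eta j - lam * w j| = |eta j| - lam * |w j|
      rcases hwpm j hjw with h1 | h1
      · have hpos : 0 < eta j := by
          have := hconf j hjw; rw [h1, one_mul] at this; exact this
        rw [h1]
        simp only [mul_one, abs_one]
        rw [abs_of_pos hpos] at hle
        rw [abs_of_nonneg (by linarith), abs_of_pos hpos]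
      · have hneg : eta j < 0 := by
          have := hconf j hjw; rw [h1] at this; nlinarith
        rw [h1]
        simp only [mul_neg, mul_one, abs_neg, abs_one, sub_neg_eq_add]
        rw [abs_of_neg hneg] at hle
        rw [abs_of_nonpos (by linarith), abs_of_neg hneg]
        ring
    have heta'0 : (inc G).mulVec eta' = 0 := by
      funext v
      show ∑ j, inc G v j * (eta j - lam * w j) = 0
      have h1 : ∑ j, inc G v j * eta j = 0 := congrFun heta v
      have h2 : ∑ j, inc G v j * w j = 0 := congrFun (mulVec_cycVec hC) v
      have : ∀ j, inc G v j * (eta j - lam * w j) =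
          inc G v j * eta j - lam * (inc G v j * w j) := fun j => by ring
      simp_rw [this]
      rw [Finset.sum_sub_distrib, h1, ← Finset.mul_sum, h2, mul_zero, sub_zero]
    -- support strictly decreases
    have hsub : Finset.univ.filter (fun i => eta' i ≠ 0) ⊆
        Finset.univ.filter (fun i => eta i ≠ 0) := by
      intro j hj
      simp only [Finset.mem_filter, Finset.mem_univ, true_and] at hj ⊢
      intro h0
      apply hj
      have h1 := habs j
      have h2 : |eta j| = 0 := by rw [h0, abs_zero]
      have h3 : 0 ≤ lam * |w j| := by positivity
      have h4 : 0 ≤ |eta' j| := abs_nonneg _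
      have : |eta' j| = 0 := by linarith [h1, h2 ▸ h1]
      exact abs_eq_zero.1 this
    obtain ⟨jstar, hjstarT, hjstar⟩ := Finset.exists_mem_eq_inf' hTne (fun j => |eta j|)
    rw [← hlam] at hjstar
    have hjstarw : w jstar ≠ 0 := (hTmem jstar).1 hjstarT
    have hjstar_eta : eta jstar ≠ 0 := by
      intro h0
      rw [h0, abs_zero] at hjstar
      rw [hjstar] at hlam_pos
      exact lt_irrefl 0 hlam_pos
    have hjstar_eta' : eta' jstar = 0 := by
      have h1 := habs jstar
      have hw1 : |w jstar| = 1 := by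
        rcases hwpm jstar hjstarw with h | h <;> rw [h] <;> norm_num
      rw [hw1, mul_one, ← hjstar, sub_self] at h1
      exact abs_eq_zero.1 h1
    have hssub : Finset.univ.filter (fun i => eta' i ≠ 0) ⊂
        Finset.univ.filter (fun i => eta i ≠ 0) := by
      refine ⟨hsub, fun hcon => ?_⟩
      have : jstar ∈ Finset.univ.filter (fun i => eta' i ≠ 0) :=
        hcon (by simp [hjstar_eta])
      simp only [Finset.mem_filter] at this
      exact this.2 hjstar_eta'
    have hl0 : l0 eta' < l0 eta := Finset.card_lt_card hssub
    have hl0' : l0 eta' ≤ N := by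
      unfold l0 at hN ⊢
      unfold l0 at hl0
      omega
    have hIH := ih eta' hl0' heta'0
    -- sum decompositions
    have hSsplit : ∑ i ∈ S, |eta i| = ∑ i ∈ S, |eta' i| + lam * ∑ i ∈ S, |w i| := by
      rw [Finset.mul_sum, ← Finset.sum_add_distrib]
      apply Finset.sum_congr rfl
      intro i _
      have := habs i
      linarith
    have hl1split : l1 eta = l1 eta' + lam * l1 w := by
      unfold l1
      rw [Finset.mul_sum, ← Finset.sum_add_distrib]
      apply Finset.sum_congr rfl
      intro i _
      have := habs i
      linarith
    -- cycle bound
    have hzW : (l1 w)⁻¹ • w ∈ W1 G := ⟨r, u, hC, rfl⟩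
    have hzsum : ∑ i ∈ S, |((l1 w)⁻¹ • w) i| = (l1 w)⁻¹ * ∑ i ∈ S, |w i| := by
      rw [Finset.mul_sum]
      apply Finset.sum_congr rfl
      intro i _
      show |(l1 w)⁻¹ * w i| = _
      rw [abs_mul, hl1w, abs_of_nonneg (by positivity)]
    have hMz := hM _ hzW
    rw [hzsum] at hMz
    have hwbound : ∑ i ∈ S, |w i| ≤ M * l1 w := by
      have hfld : l1 w * ((l1 w)⁻¹ * ∑ i ∈ S, |w i|) = ∑ i ∈ S, |w i| := by
        rw [← mul_assoc, mul_inv_cancel₀ (by rw [hl1w]; exact ne_of_gt hr0), one_mul]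
      have := mul_le_mul_of_nonneg_left hMz (le_of_lt (hl1w ▸ hr0))
      rw [hfld] at this
      linarith [this]
    have hlamw : lam * ∑ i ∈ S, |w i| ≤ lam * (M * l1 w) :=
      mul_le_mul_of_nonneg_left hwbound (le_of_lt hlam_pos)
    rw [hSsplit, hl1split]
    have : M * (l1 eta' + lam * l1 w) = M * l1 eta' + lam * (M * l1 w) := by ring
    rw [this]
    linarith

end Main

theorem stmt12 {m n : ℕ} (G : DiGraph m n) (hconn : (toSG G).Connected)
    (hcyc : ∃ r u, IsSimpleCycle G r u) (S : Finset (Fin n)) (hS : S.Nonempty) :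
    sSup {t : ℝ | ∃ η : Fin n → ℝ, (inc G).mulVec η = 0 ∧ l1 η ≤ 1 ∧
        t = ∑ i ∈ S, |η i|} =
      sSup {t : ℝ | ∃ z ∈ W1 G, t = ∑ i ∈ S, |z i|} := by
  set A : Set ℝ := {t : ℝ | ∃ η : Fin n → ℝ, (inc G).mulVec η = 0 ∧ l1 η ≤ 1 ∧
    t = ∑ i ∈ S, |η i|} with hA
  set B : Set ℝ := {t : ℝ | ∃ z ∈ W1 G, t = ∑ i ∈ S, |z i|} with hB
  have hAb : BddAbove A := by
    refine ⟨1, fun t ht => ?_⟩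
    obtain ⟨η, _, hl, rfl⟩ := ht
    exact le_trans (sumS_abs_le_l1 S η) hl
  have hBb : BddAbove B := by
    refine ⟨1, fun t ht => ?_⟩
    obtain ⟨z, hz, rfl⟩ := ht
    exact le_trans (sumS_abs_le_l1 S z) (le_of_eq (W1_l1 hz))
  obtain ⟨r₀, u₀, hC₀⟩ := hcyc
  have hz₀ : (l1 (cycVec G r₀ u₀))⁻¹ • cycVec G r₀ u₀ ∈ W1 G := ⟨r₀, u₀, hC₀, rfl⟩
  have hBne : B.Nonempty :=
    ⟨∑ i ∈ S, |((l1 (cycVec G r₀ u₀))⁻¹ • cycVec G r₀ u₀) i|, _, hz₀, rfl⟩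
  have hAne : A.Nonempty := by
    refine ⟨0, 0, Matrix.mulVec_zero _, ?_, ?_⟩
    · simp [l1]
    · simp
  have hBA : B ⊆ A := by
    rintro t ⟨z, hz, rfl⟩
    exact ⟨z, W1_mulVec hz, le_of_eq (W1_l1 hz), rfl⟩
  have hM : ∀ z ∈ W1 G, ∑ i ∈ S, |z i| ≤ sSup B :=
    fun z hz => le_csSup hBb ⟨z, hz, rfl⟩
  have hM0 : 0 ≤ sSup B := by
    refine le_trans ?_ (le_csSup hBb hBne.choose_spec)
    obtain ⟨z, hz, hzeq⟩ := hBne.choose_spec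
    rw [hzeq]
    exact Finset.sum_nonneg (fun i _ => abs_nonneg _)
  apply le_antisymm
  · apply csSup_le hAne
    rintro t ⟨η, hη0, hη1, rfl⟩
    have := key_bound S hM (l0 η) η le_rfl hη0
    calc ∑ i ∈ S, |η i| ≤ sSup B * l1 η := this
      _ ≤ sSup B * 1 := mul_le_mul_of_nonneg_left hη1 hM0
      _ = sSup B := mul_one _
  · exact csSup_le_csSup hAb hBne hBA
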